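/- arXiv:math/0501042 — 2 statements merged into one kernel-verified Lean document; each statement's English description precedes it below -/
import Mathlib

section
/- Let 0 < p < 1, q = 1 - p, and suppose (y, z) satisfies (y - ½)² + (z - ½)² + 2(p - q)(y - ½)(z - ½) = p q. Then 0 ≤ y ≤ 1 and 0 ≤ z ≤ 1 (i.e., the ellipse E is contained in the unit square). -/
theorem ellipse_in_unit_square (p : ℝ) (hp : 0 < p) (hp1 : p < 1) (y z : ℝ)
    (h : (y - 1 / 2) ^ 2 + (z - 1 / 2) ^ 2 +
        2 * (p - (1 - p)) * (y - 1 / 2) * (z - 1 / 2) = p * (1 - p)) :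
    0 ≤ y ∧ y ≤ 1 ∧ 0 ≤ z ∧ z ≤ 1 := by
  set a := y - 1 / 2 with ha
  set b := z - 1 / 2 with hb
  set k := p - (1 - p) with hk
  have hk2 : 1 - k ^ 2 = 4 * (p * (1 - p)) := by rw [hk]; ring
  have hkpos : 0 < 1 - k ^ 2 := by nlinarith
  have key1 : (1 - k ^ 2) * (1 / 4 - a ^ 2) = (b + k * a) ^ 2 := by linear_combination hk2 / 4 - h
  have key2 : (1 - k ^ 2) * (1 / 4 - b ^ 2) = (a + k * b) ^ 2 := by linear_combination hk2 / 4 - h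
  have ha2 : a ^ 2 ≤ 1 / 4 := by nlinarith [sq_nonneg (b + k * a)]
  have hb2 : b ^ 2 ≤ 1 / 4 := by nlinarith [sq_nonneg (a + k * b)]
  refine ⟨?_, ?_, ?_, ?_⟩ <;> nlinarith [ha2, hb2]
end

section
/- Let 0 < p < 1, q = 1 - p, N a positive integer, n = N - j with j ≥ -1 an integer and j ≤ N - 1. Then the leading-order boundary relation for the polynomials R_j(y) = K_{N-j}(N y)/C(N y, N - j) from the recurrence requires R_{-1}(y) = 1; equivalently, K_{N+1}(x) = C(x, N + 1) for every real x. -/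
open Finset

/-- Generalized binomial coefficient C(x, k) = x(x-1)⋯(x-k+1)/k!. -/
noncomputable def gchoose (x : ℝ) (k : ℕ) : ℝ :=
  (∏ i ∈ Finset.range k, (x - i)) / (Nat.factorial k)

/-- Krawtchouk polynomial K_n(x) = ∑_{k=0}^n C(x,k) C(N-x,n-k) q^k (-p)^{n-k}, q = 1-p. -/
noncomputable def kraw (N : ℕ) (p : ℝ) (n : ℕ) (x : ℝ) : ℝ :=
  ∑ k ∈ Finset.range (n + 1),
    gchoose x k * gchoose ((N : ℝ) - x) (n - k) * (1 - p) ^ k * (-p) ^ (n - k)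

lemma prod_range_cast (m k : ℕ) :
    ∏ i ∈ Finset.range k, ((m : ℝ) - i) = (m.descFactorial k : ℝ) := by
  rcases le_or_gt k m with h | h
  · rw [Nat.descFactorial_eq_prod_range, Nat.cast_prod]
    refine Finset.prod_congr rfl fun i hi => ?_
    rw [Nat.cast_sub (le_of_lt (lt_of_lt_of_le (Finset.mem_range.mp hi) h))]
  · rw [Nat.descFactorial_eq_zero_iff_lt.mpr h, Nat.cast_zero]
    exact Finset.prod_eq_zero (Finset.mem_range.mpr h) (by simp)

lemma gchoose_nat (m k : ℕ) : gchoose (m : ℝ) k = (m.choose k : ℝ) := by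
  rw [gchoose, prod_range_cast, Nat.descFactorial_eq_factorial_mul_choose,
    Nat.cast_mul]
  have h : (k.factorial : ℝ) ≠ 0 := by exact_mod_cast (Nat.factorial_pos k).ne'
  field_simp

lemma gchoose_nat_zero {m k : ℕ} (h : m < k) : gchoose (m : ℝ) k = 0 := by
  rw [gchoose_nat, Nat.choose_eq_zero_of_lt h, Nat.cast_zero]

lemma gchoose_neg_one (m : ℕ) : gchoose (-1 : ℝ) m = (-1) ^ m := by
  rw [gchoose]
  have : ∏ i ∈ Finset.range m, ((-1 : ℝ) - i) = (-1) ^ m * (m.factorial : ℝ) := by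
    rw [← Finset.prod_range_add_one_eq_factorial m, Nat.cast_prod]
    calc ∏ i ∈ Finset.range m, ((-1 : ℝ) - i)
        = ∏ i ∈ Finset.range m, ((-1 : ℝ) * ((i : ℕ) + 1 : ℕ)) :=
          Finset.prod_congr rfl fun i _ => by push_cast; ring
      _ = (-1) ^ m * ∏ i ∈ Finset.range m, (((i : ℕ) + 1 : ℕ) : ℝ) := by
          rw [Finset.prod_mul_distrib, Finset.prod_const, Finset.card_range]
  rw [this, mul_div_assoc, div_self, mul_one]
  exact_mod_cast (Nat.factorial_pos m).ne'

theorem kraw_top_boundary (N : ℕ) (hN : 1 ≤ N) (p : ℝ) (hp : 0 < p) (hp1 : p < 1) (x : ℝ) :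
    kraw N p (N + 1) x = gchoose x (N + 1) := by
  classical
  set Q : Polynomial ℝ :=
    (∑ k ∈ Finset.range (N + 2),
      Polynomial.C ((1 - p) ^ k * (-p) ^ (N + 1 - k) /
        ((Nat.factorial k : ℝ) * (Nat.factorial (N + 1 - k) : ℝ))) *
      (∏ i ∈ Finset.range k, (Polynomial.X - Polynomial.C (i : ℝ))) *
      (∏ i ∈ Finset.range (N + 1 - k),
        (Polynomial.C (N : ℝ) - Polynomial.X - Polynomial.C (i : ℝ)))) -
    Polynomial.C ((Nat.factorial (N + 1) : ℝ))⁻¹ *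
      ∏ i ∈ Finset.range (N + 1), (Polynomial.X - Polynomial.C (i : ℝ)) with hQ
  have hev : ∀ y : ℝ, Q.eval y = kraw N p (N + 1) y - gchoose y (N + 1) := by
    intro y
    rw [hQ]
    simp only [Polynomial.eval_sub, Polynomial.eval_mul, Polynomial.eval_finset_sum,
      Polynomial.eval_prod, Polynomial.eval_C, Polynomial.eval_X]
    rw [kraw, gchoose]
    congr 1
    · refine Finset.sum_congr rfl fun k _ => ?_
      rw [gchoose, gchoose]
      field_simp
    · rw [div_eq_inv_mul]
  have hdeg : Q.natDegree ≤ N + 1 := by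
    rw [hQ]
    refine le_trans (Polynomial.natDegree_sub_le _ _) (max_le ?_ ?_)
    · refine Polynomial.natDegree_sum_le_of_forall_le _ _ fun k hk => ?_
      have hk' : k ≤ N + 1 := Nat.lt_succ_iff.mp (Finset.mem_range.mp hk)
      refine le_trans (Polynomial.natDegree_mul_le) ?_
      have h1 : (Polynomial.C ((1 - p) ^ k * (-p) ^ (N + 1 - k) /
          ((Nat.factorial k : ℝ) * (Nat.factorial (N + 1 - k) : ℝ))) *
          ∏ i ∈ Finset.range k, (Polynomial.X - Polynomial.C (i : ℝ))).natDegree ≤ k := by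
        refine le_trans (Polynomial.natDegree_mul_le) ?_
        rw [Polynomial.natDegree_C, zero_add]
        refine le_trans (Polynomial.natDegree_prod_le _ _) ?_
        refine le_trans (Finset.sum_le_card_nsmul _ _ 1 fun i _ => ?_) (by simp)
        exact le_of_eq (Polynomial.natDegree_X_sub_C _)
      have h2 : (∏ i ∈ Finset.range (N + 1 - k),
          (Polynomial.C (N : ℝ) - Polynomial.X - Polynomial.C (i : ℝ))).natDegree ≤
          N + 1 - k := by
        refine le_trans (Polynomial.natDegree_prod_le _ _) ?_
        refine le_trans (Finset.sum_le_card_nsmul _ _ 1 fun i _ => ?_) (by simp)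
        refine le_trans (Polynomial.natDegree_sub_le _ _) (max_le ?_ (by simp))
        refine le_trans (Polynomial.natDegree_sub_le _ _) (max_le (by simp) (by simp))
      calc _ ≤ k + (N + 1 - k) := add_le_add h1 h2
        _ ≤ N + 1 := by omega
    · refine le_trans (Polynomial.natDegree_mul_le) ?_
      rw [Polynomial.natDegree_C, zero_add]
      refine le_trans (Polynomial.natDegree_prod_le _ _) ?_
      refine le_trans (Finset.sum_le_card_nsmul _ _ 1 fun i _ => ?_) (by simp)
      exact le_of_eq (Polynomial.natDegree_X_sub_C _)
  have hzero : Q = 0 := by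
    refine Polynomial.eq_zero_of_natDegree_lt_card_of_eval_eq_zero' Q
      ((Finset.range (N + 2)).image (Nat.cast : ℕ → ℝ)) ?_ ?_
    · intro y hy
      obtain ⟨m, hm, rfl⟩ := Finset.mem_image.mp hy
      have hm' : m ≤ N + 1 := Nat.lt_succ_iff.mp (Finset.mem_range.mp hm)
      rw [hev]
      rcases eq_or_lt_of_le hm' with hmN | hmN
      · -- m = N + 1
        subst hmN
        have hR : gchoose ((N + 1 : ℕ) : ℝ) (N + 1) = 1 := by
          rw [gchoose_nat, Nat.choose_self, Nat.cast_one]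
        rw [hR, kraw]
        have : ∀ k ∈ Finset.range (N + 1 + 1),
            gchoose (((N + 1 : ℕ) : ℝ)) k * gchoose ((N : ℝ) - ((N + 1 : ℕ) : ℝ)) (N + 1 - k) *
              (1 - p) ^ k * (-p) ^ (N + 1 - k)
            = ((N + 1).choose k : ℝ) * (1 - p) ^ k * p ^ (N + 1 - k) := by
          intro k hk
          have hN1 : (N : ℝ) - ((N + 1 : ℕ) : ℝ) = -1 := by push_cast; ring
          rw [hN1, gchoose_neg_one, gchoose_nat]
          have hpp : ((-1 : ℝ)) ^ (N + 1 - k) * (-p) ^ (N + 1 - k) = p ^ (N + 1 - k) := by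
            rw [← mul_pow, neg_one_mul, neg_neg]
          rw [← hpp]; ring
        rw [Finset.sum_congr rfl this]
        have := add_pow (1 - p) p (N + 1)
        rw [show (1 - p) + p = 1 by ring, one_pow] at this
        rw [sub_eq_zero]
        conv_rhs => rw [this]
        refine Finset.sum_congr rfl fun k hk => ?_
        ring
      · -- m ≤ N
        have hmN' : m ≤ N := Nat.lt_succ_iff.mp hmN
        have h1 : kraw N p (N + 1) (m : ℝ) = 0 := by
          rw [kraw]
          refine Finset.sum_eq_zero fun k hk => ?_
          rcases le_or_gt k m with hkm | hkm
          · have : gchoose ((N : ℝ) - (m : ℝ)) (N + 1 - k) = 0 := by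
              have hcast : (N : ℝ) - (m : ℝ) = ((N - m : ℕ) : ℝ) := by
                rw [Nat.cast_sub hmN']
              rw [hcast]
              exact gchoose_nat_zero (by omega)
            rw [this]; ring
          · rw [gchoose_nat_zero hkm]; ring
        rw [h1, gchoose_nat_zero (by omega), sub_zero]
    · rw [Finset.card_image_of_injective _ Nat.cast_injective, Finset.card_range]
      omega
  have := hev x
  rw [hzero] at this
  simp at this
  linarith [this]
end
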